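/- With E, B the fields of a uniformly moving point charge as above (V < c, γ = (1−V²/c²)^{-1/2}), the source-free Maxwell equations hold off the trajectory: ∇·E = 0, ∇·B = 0, ∇×E = −∂ₜB, and c²∇×B = ∂ₜE at every (r,t) with r ≠ (x₀+Vt, y₀, z₀). -/

import Mathlib

noncomputable section

abbrev V3 : Type := Fin 3 → ℝ

/-- Partial derivative ∂ⱼ Fᵢ at r. -/
def pd (F : V3 → V3) (r : V3) (i j : Fin 3) : ℝ :=
  fderiv ℝ F r (Pi.single j 1) i

/-- Spatial Jacobian matrix of a vector field on ℝ³. -/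
def jac (F : V3 → V3) (r : V3) : Matrix (Fin 3) (Fin 3) ℝ :=
  fun i j => pd F r i j

/-- Divergence of a vector field on ℝ³. -/
def div3 (F : V3 → V3) (r : V3) : ℝ := ∑ i, pd F r i i

/-- Curl of a vector field on ℝ³. -/
def curl3 (F : V3 → V3) (r : V3) : V3 :=
  ![pd F r 2 1 - pd F r 1 2, pd F r 0 2 - pd F r 2 0, pd F r 1 0 - pd F r 0 1]

/-!
Writing `u = r - (x₀ + V t, y₀, z₀)` and `S(u) = (γ u₀)² + u₁² + u₂²`, the field is a rigidly
translating profile `E(r, t) = G(u)` with `G(u) = q γ S(u)^(-3/2) • u`, and `B = w × E` with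
`c² w = v = (V, 0, 0)`. For such fields `∂ₜ = -(v · ∇)` and `curl (w × G) = (div G) w - (w · ∇) G`,
so the four equations reduce to two static identities for `G`:
`div G = 0`, because `∇S · u = 2 S` (`S` is homogeneous of degree 2), and `curl G = w × (v · ∇) G`,
because `∇S` is `(γ² u₀, u₁, u₂)` up to a factor, so `curl G` only sees the anisotropy
`γ² - 1 = γ² V² / c²`.
-/

open Matrix

def boostedSq (γ : ℝ) (u : V3) : ℝ := (γ * u 0) ^ 2 + u 1 ^ 2 + u 2 ^ 2

def coulombFactor (q γ : ℝ) (u : V3) : ℝ := q * γ / boostedSq γ u ^ ((3 : ℝ) / 2)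

def heavisideField (q γ : ℝ) (u : V3) : V3 := coulombFactor q γ u • u

section HeavisideField

variable {q γ : ℝ} {u : V3}

lemma boostedSq_nonneg (γ : ℝ) (u : V3) : 0 ≤ boostedSq γ u := by
  unfold boostedSq; positivity

lemma boostedSq_pos (hγ : γ ≠ 0) (hu : u ≠ 0) : 0 < boostedSq γ u := by
  contrapose! hu
  unfold boostedSq at hu
  obtain ⟨h0, h1, h2⟩ : (γ * u 0) ^ 2 = 0 ∧ u 1 ^ 2 = 0 ∧ u 2 ^ 2 = 0 := by
    refine ⟨?_, ?_, ?_⟩ <;> linarith [sq_nonneg (γ * u 0), sq_nonneg (u 1), sq_nonneg (u 2)]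
  simp only [pow_eq_zero_iff two_ne_zero, mul_eq_zero, hγ, false_or] at h0 h1 h2
  ext i; fin_cases i <;> assumption

lemma hasFDerivAt_boostedSq (γ : ℝ) (u : V3) :
    HasFDerivAt (boostedSq γ)
      ((2 * γ ^ 2 * u 0) • ContinuousLinearMap.proj (R := ℝ) (φ := fun _ : Fin 3 => ℝ) 0
        + (2 * u 1) • ContinuousLinearMap.proj 1 + (2 * u 2) • ContinuousLinearMap.proj 2) u := by
  have hx : ∀ i : Fin 3, HasFDerivAt (fun x : V3 => x i) (ContinuousLinearMap.proj i) u :=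
    fun i => hasFDerivAt_apply (𝕜 := ℝ) (F' := fun _ : Fin 3 => ℝ) i u
  refine ((((hx 0).const_mul γ).pow 2).add ((hx 1).pow 2)).add ((hx 2).pow 2) |>.congr_fderiv ?_
  ext v
  simp only [Fin.isValue, Nat.add_one_sub_one, pow_one, nsmul_eq_mul, Nat.cast_ofNat,
    _root_.add_apply, _root_.smul_apply, ContinuousLinearMap.proj_apply, smul_eq_mul]
  ring

lemma hasFDerivAt_coulombFactor (hS : boostedSq γ u ≠ 0) :
    HasFDerivAt (coulombFactor q γ)
      ((-(3 / 2) * coulombFactor q γ u / boostedSq γ u) • fderiv ℝ (boostedSq γ) u) u := by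
  have hpow : ∀ x, coulombFactor q γ x = q * γ * boostedSq γ x ^ (-(3 / 2) : ℝ) := fun x => by
    rw [coulombFactor, Real.rpow_neg (boostedSq_nonneg γ x), div_eq_mul_inv]
  refine HasFDerivAt.congr_of_eventuallyEq ?_ (.of_forall hpow)
  refine (((hasFDerivAt_boostedSq γ u).rpow_const (p := -(3 / 2)) (Or.inl hS)).const_mul
    (q * γ)).congr_fderiv ?_
  rw [(hasFDerivAt_boostedSq γ u).fderiv, smul_smul, hpow, Real.rpow_sub_one hS]
  congr 1
  ring

lemma fderiv_heavisideField_apply (hS : boostedSq γ u ≠ 0) (y : V3) :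
    fderiv ℝ (heavisideField q γ) u y = coulombFactor q γ u •
      (y - (3 * (γ ^ 2 * u 0 * y 0 + u 1 * y 1 + u 2 * y 2) / boostedSq γ u) • u) := by
  have h := (hasFDerivAt_coulombFactor (q := q) hS).smul (hasFDerivAt_id u)
  rw [show heavisideField q γ = coulombFactor q γ • id from rfl, h.fderiv]
  ext i
  simp only [(hasFDerivAt_boostedSq γ u).fderiv, Fin.isValue, smul_add, id_eq, _root_.add_apply,
    _root_.smul_apply, ContinuousLinearMap.id_apply, ContinuousLinearMap.smulRight_apply,
    ContinuousLinearMap.proj_apply, smul_eq_mul, Pi.add_apply, Pi.smul_apply, Pi.sub_apply]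
  field_simp
  ring

lemma differentiableAt_heavisideField (hS : boostedSq γ u ≠ 0) :
    DifferentiableAt ℝ (heavisideField q γ) u :=
  ((hasFDerivAt_coulombFactor hS).smul (hasFDerivAt_id u)).differentiableAt

lemma div3_heavisideField (hS : boostedSq γ u ≠ 0) : div3 (heavisideField q γ) u = 0 := by
  simp only [div3, pd, fderiv_heavisideField_apply hS, Fin.sum_univ_three, Pi.smul_apply,
    Pi.sub_apply, Pi.single_eq_same, Pi.single_eq_of_ne, ne_eq, one_ne_zero, zero_ne_one,
    Fin.reduceEq, not_false_eq_true, smul_eq_mul, mul_one, mul_zero, add_zero, zero_add]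
  field_simp
  unfold boostedSq
  ring

lemma curl3_heavisideField {V c : ℝ} (hS : boostedSq γ u ≠ 0) (hc : c ≠ 0)
    (hγ : γ ^ 2 * (c ^ 2 - V ^ 2) = c ^ 2) :
    curl3 (heavisideField q γ) u =
      ![V / c ^ 2, 0, 0] ⨯₃ fderiv ℝ (heavisideField q γ) u ![V, 0, 0] := by
  rw [fderiv_heavisideField_apply hS]
  ext i
  fin_cases i <;> simp [curl3, pd, fderiv_heavisideField_apply hS, cross_apply, vecHead, vecTail]
    <;> field_simp
  · ring
  · linear_combination coulombFactor q γ u * u 0 * u 2 * hγ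
  · linear_combination -coulombFactor q γ u * u 0 * u 1 * hγ

end HeavisideField

section TravelingField

variable {F : V3 → V3} {r : V3}

lemma pd_comp_sub (a : V3) : pd (fun x => F (x - a)) r = pd F (r - a) := by
  funext i j
  simp only [pd, fderiv_comp_sub]

lemma div3_comp_sub (a : V3) : div3 (fun x => F (x - a)) r = div3 F (r - a) := by
  simp only [div3, pd_comp_sub]

lemma curl3_comp_sub (a : V3) : curl3 (fun x => F (x - a)) r = curl3 F (r - a) := by
  simp only [curl3, pd_comp_sub]

lemma fderiv_apply_eq_sum_pd (w : V3) : fderiv ℝ F r w = ∑ j, w j • fun i => pd F r i j := by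
  conv_lhs => rw [pi_eq_sum_univ' w]
  simp only [map_sum, map_smul]
  rfl

lemma pd_cross_left (w : V3) (hF : DifferentiableAt ℝ F r) (i j : Fin 3) :
    pd (fun x => w ⨯₃ F x) r i j = (w ⨯₃ fun k => pd F r k j) i := by
  have h : HasFDerivAt (fun x => w ⨯₃ F x)
      ((LinearMap.toContinuousLinearMap (crossProduct w)).comp (fderiv ℝ F r)) r :=
    (LinearMap.toContinuousLinearMap (crossProduct w)).hasFDerivAt.comp r hF.hasFDerivAt
  rw [pd, h.fderiv]
  rfl

lemma div3_cross_left (w : V3) (hF : DifferentiableAt ℝ F r) :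
    div3 (fun x => w ⨯₃ F x) r = -(w ⬝ᵥ curl3 F r) := by
  simp only [div3, Fin.sum_univ_three, pd_cross_left w hF]
  simp only [cross_apply, curl3, dotProduct, Fin.sum_univ_three, Fin.isValue, cons_val_zero,
    cons_val_one, cons_val]
  ring

lemma curl3_cross_left (w : V3) (hF : DifferentiableAt ℝ F r) :
    curl3 (fun x => w ⨯₃ F x) r = div3 F r • w - fderiv ℝ F r w := by
  rw [fderiv_apply_eq_sum_pd]
  ext i
  simp only [curl3, pd_cross_left w hF]
  fin_cases i <;> simp [div3, Fin.sum_univ_three, cross_apply] <;> ring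

lemma hasDerivAt_comp_const_sub {p : ℝ → V3} {v : V3} {t : ℝ}
    (hF : DifferentiableAt ℝ F (r - p t)) (hp : HasDerivAt p v t) :
    HasDerivAt (fun s => F (r - p s)) (-fderiv ℝ F (r - p t) v) t := by
  have h := hF.hasFDerivAt.comp_hasDerivAt t (hp.const_sub r)
  rwa [map_neg] at h

theorem maxwell_of_travelingField {G : V3 → V3} {p : ℝ → V3} {v w : V3} {t c : ℝ}
    (E B : V3 → ℝ → V3) (hE : ∀ r t, E r t = G (r - p t)) (hB : ∀ r t, B r t = w ⨯₃ E r t)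
    (hp : HasDerivAt p v t) (hw : c ^ 2 • w = v) (hG : DifferentiableAt ℝ G (r - p t))
    (hdiv : div3 G (r - p t) = 0) (hcurl : curl3 G (r - p t) = w ⨯₃ fderiv ℝ G (r - p t) v) :
    div3 (fun x => E x t) r = 0 ∧
      div3 (fun x => B x t) r = 0 ∧
      curl3 (fun x => E x t) r = -deriv (B r) t ∧
      c ^ 2 • curl3 (fun x => B x t) r = deriv (E r) t := by
  have hEt : (fun x => E x t) = fun x => G (x - p t) := funext (hE · t)
  have hBt : (fun x => B x t) = fun x => w ⨯₃ G (x - p t) := funext fun x => by rw [hB, hE]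
  have hGt : DifferentiableAt ℝ (fun x => G (x - p t)) r := (differentiableAt_comp_sub _).2 hG
  have hdE : HasDerivAt (E r) (-fderiv ℝ G (r - p t) v) t := by
    rw [show E r = fun s => G (r - p s) from funext (hE r)]
    exact hasDerivAt_comp_const_sub hG hp
  have hdB : HasDerivAt (B r) (w ⨯₃ -fderiv ℝ G (r - p t) v) t := by
    rw [show B r = fun s => w ⨯₃ E r s from funext (hB r)]
    exact (LinearMap.toContinuousLinearMap (crossProduct w)).hasFDerivAt.comp_hasDerivAt t hdE
  refine ⟨?_, ?_, ?_, ?_⟩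
  · rw [hEt, div3_comp_sub, hdiv]
  · rw [hBt, div3_cross_left w hGt, curl3_comp_sub, hcurl, dot_self_cross, neg_zero]
  · rw [hEt, curl3_comp_sub, hcurl, hdB.deriv, map_neg, neg_neg]
  · rw [hBt, curl3_cross_left w hGt, div3_comp_sub, hdiv, zero_smul, zero_sub, fderiv_comp_sub,
      hdE.deriv, smul_neg, ← map_smul, hw]

end TravelingField

lemma one_sub_sq_div_sq_pos {V c : ℝ} (h : V ^ 2 < c ^ 2) : 0 < 1 - V ^ 2 / c ^ 2 := by
  rw [sub_pos, div_lt_one (by nlinarith [sq_nonneg V])]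
  exact h

lemma lorentzFactor_pos {V c : ℝ} (h : V ^ 2 < c ^ 2) :
    0 < (1 - V ^ 2 / c ^ 2) ^ (-(1 / 2) : ℝ) :=
  Real.rpow_pos_of_pos (one_sub_sq_div_sq_pos h) _

lemma lorentzFactor_sq_mul {V c : ℝ} (h : V ^ 2 < c ^ 2) :
    ((1 - V ^ 2 / c ^ 2) ^ (-(1 / 2) : ℝ)) ^ 2 * (c ^ 2 - V ^ 2) = c ^ 2 := by
  have hc : c ^ 2 ≠ 0 := by nlinarith [sq_nonneg V]
  rw [← Real.rpow_natCast, ← Real.rpow_mul (one_sub_sq_div_sq_pos h).le]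
  norm_num [Real.rpow_neg_one]
  rw [inv_mul_eq_iff_eq_mul₀ (one_sub_sq_div_sq_pos h).ne', sub_mul, one_mul,
    div_mul_cancel₀ _ hc]

lemma hasDerivAt_uniformMotion (a₀ a₁ a₂ V t : ℝ) :
    HasDerivAt (fun s => ![a₀ + V * s, a₁, a₂]) ![V, 0, 0] t := by
  rw [hasDerivAt_pi]
  intro i
  fin_cases i
  · simpa using ((hasDerivAt_id t).const_mul V).const_add a₀
  · exact hasDerivAt_const t a₁
  · exact hasDerivAt_const t a₂

theorem stmt_10 (Vv c q x₀ y₀ z₀ γ : ℝ) (hV : 0 < Vv) (hVc : Vv < c)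
    (hγ : γ = (1 - Vv ^ 2 / c ^ 2) ^ (-(1 / 2) : ℝ))
    (E B : V3 → ℝ → V3)
    (hE : ∀ (r : V3) (t : ℝ),
      E r t = ![q * (γ * (r 0 - x₀ - Vv * t)) /
                  ((γ * (r 0 - x₀ - Vv * t)) ^ 2 + (r 1 - y₀) ^ 2 + (r 2 - z₀) ^ 2) ^ ((3:ℝ)/2),
                γ * q * (r 1 - y₀) /
                  ((γ * (r 0 - x₀ - Vv * t)) ^ 2 + (r 1 - y₀) ^ 2 + (r 2 - z₀) ^ 2) ^ ((3:ℝ)/2),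
                γ * q * (r 2 - z₀) /
                  ((γ * (r 0 - x₀ - Vv * t)) ^ 2 + (r 1 - y₀) ^ 2 + (r 2 - z₀) ^ 2) ^ ((3:ℝ)/2)])
    (hB : ∀ (r : V3) (t : ℝ),
      B r t = ![0, -Vv * E r t 2 / c ^ 2, Vv * E r t 1 / c ^ 2]) :
    ∀ (r : V3) (t : ℝ), r ≠ ![x₀ + Vv * t, y₀, z₀] →
      div3 (fun x => E x t) r = 0 ∧
      div3 (fun x => B x t) r = 0 ∧
      curl3 (fun x => E x t) r = -deriv (B r) t ∧
      c ^ 2 • curl3 (fun x => B x t) r = deriv (E r) t := by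
  intro r t hr
  have hVc2 : Vv ^ 2 < c ^ 2 := by nlinarith
  have hEK : ∀ r t, E r t = heavisideField q γ (r - ![x₀ + Vv * t, y₀, z₀]) := fun r t => by
    have hd : ∀ i, (r - ![x₀ + Vv * t, y₀, z₀]) i = ![r 0 - x₀ - Vv * t, r 1 - y₀, r 2 - z₀] i := by
      intro i; fin_cases i <;> simp [sub_sub]
    ext i
    simp only [hE, heavisideField, coulombFactor, boostedSq, Pi.smul_apply, hd, smul_eq_mul]
    fin_cases i <;> simp <;> ring
  have hBE : ∀ r t, B r t = ![Vv / c ^ 2, 0, 0] ⨯₃ E r t := fun r t => by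
    ext i
    fin_cases i <;> simp [hB, cross_apply] <;> ring
  have hS : boostedSq γ (r - ![x₀ + Vv * t, y₀, z₀]) ≠ 0 :=
    (boostedSq_pos (hγ ▸ (lorentzFactor_pos hVc2).ne') (sub_ne_zero.2 hr)).ne'
  have hc : c ≠ 0 := (hV.trans hVc).ne'
  refine maxwell_of_travelingField E B hEK hBE (hasDerivAt_uniformMotion x₀ y₀ z₀ Vv t) ?_
    (differentiableAt_heavisideField hS) (div3_heavisideField hS)
    (curl3_heavisideField hS hc (hγ ▸ lorentzFactor_sq_mul hVc2))
  ext i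
  fin_cases i <;> simp [mul_div_cancel₀ _ (pow_ne_zero 2 hc)]
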